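/- Let P be an N-point set in [0,1)^d, let j ∈ ℕ_{-1}^d and m ∈ D_j, and suppose the dyadic interval I_{j,m} contains at most B points of P. Then the Haar coefficient of the discrepancy function satisfies |⟨D_P, h_{j,m}⟩| ≤ (B/N) · 2^{-|j|} + C_d · 2^{-2|j|} for a constant C_d depending only on d. -/

import Mathlib

open MeasureTheory

/-- One-dimensional dyadic Haar function `h_{j,m}` on `[0,1)`.
For `j = -1` (encoded by `j < 0`) it is the indicator of `[0,1)`; for `j ≥ 0` it is `1`
on the left half of the dyadic interval `I_{j,m} = [m/2^j, (m+1)/2^j)`, `-1` on the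
right half, and `0` elsewhere. -/
noncomputable def haar1 (j : ℤ) (m : ℕ) (x : ℝ) : ℝ :=
  if j < 0 then (if 0 ≤ x ∧ x < 1 then 1 else 0)
  else if (m : ℝ) / 2 ^ j.toNat ≤ x ∧ x < (2 * m + 1) / 2 ^ (j.toNat + 1) then 1
  else if (2 * m + 1) / 2 ^ (j.toNat + 1) ≤ x ∧ x < (m + 1) / 2 ^ j.toNat then -1
  else 0

/-- Multivariate (tensor product) dyadic Haar function `h_{j,m}` on `[0,1)^d`. -/
noncomputable def haarD {d : ℕ} (j : Fin d → ℤ) (m : Fin d → ℕ) (x : Fin d → ℝ) : ℝ :=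
  ∏ i, haar1 (j i) (m i) (x i)

/-- The level `|j| = ∑ max(j_i, 0)` of a level vector `j ∈ ℕ_{-1}^d`. -/
def absj {d : ℕ} (j : Fin d → ℤ) : ℕ := ∑ i, (j i).toNat

/-- `(j, m)` is a valid Haar index: each `j i ∈ ℕ_{-1} = {-1, 0, 1, ...}` and
`m i ∈ D_{j i} = {0, ..., 2^{max(j i,0)} - 1}` (so `m i = 0` when `j i = -1`). -/
def validIdx {d : ℕ} (j : Fin d → ℤ) (m : Fin d → ℕ) : Prop :=
  (∀ i, -1 ≤ j i) ∧ ∀ i, m i < 2 ^ (j i).toNat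

/-- The Haar coefficient `⟨f, h_{j,m}⟩ = ∫_{[0,1]^d} f(x) h_{j,m}(x) dx`. -/
noncomputable def haarCoef {d : ℕ} (f : (Fin d → ℝ) → ℝ) (j : Fin d → ℤ) (m : Fin d → ℕ) : ℝ :=
  ∫ x in Set.Icc (0 : Fin d → ℝ) 1, f x * haarD j m x

open Classical in
/-- The discrepancy function of the `N`-point set `P` in `[0,1)^d`:
`D_P(x) = (1/N) ∑_{z ∈ P} 1_{[0,x)}(z) − x_1⋯x_d`. -/
noncomputable def discF {d : ℕ} (N : ℕ) (P : Fin N → Fin d → ℝ) (x : Fin d → ℝ) : ℝ :=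
  (1 / (N : ℝ)) * ∑ k : Fin N, (if ∀ i, 0 ≤ P k i ∧ P k i < x i then (1 : ℝ) else 0)
    - ∏ i, x i

/-- `x` belongs to the one-dimensional dyadic interval `I_{j,m}`
(`I_{-1,0} = [0,1)` for `j = -1`). -/
def memI (j : ℤ) (m : ℕ) (x : ℝ) : Prop :=
  if j < 0 then 0 ≤ x ∧ x < 1
  else (m : ℝ) / 2 ^ j.toNat ≤ x ∧ x < ((m : ℝ) + 1) / 2 ^ j.toNat

/-! Expanding `D_P` and the tensor-product Haar function, Fubini turns `⟨D_P, h_{j,m}⟩` into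
`N⁻¹ ∑_{z ∈ P} ∏_i ⟨1_{(z_i, 1]}, h_{j_i,m_i}⟩ - ∏_i ⟨t, h_{j_i,m_i}⟩`. A one-dimensional Haar
function is bounded by `1` and supported on `I_{j,m}`, of length `2^{-j}`, so
`|⟨g, h_{j,m}⟩| ≤ sup_{I_{j,m}} |g| · 2^{-j}`. For `g = 1_{(z,1]}` this gives `2^{-j}`; for `g = t`
the mean zero of `h_{j,m}` (`j ≥ 0`) lets us subtract the left endpoint of `I_{j,m}`, which gives
`2^{-2j}`. The mean zero also kills `⟨1_{(z,1]}, h_{j,m}⟩` unless `z ∈ I_{j,m}`, so only the at most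
`B` points of `P` in `I_{j,m}` contribute, and the bound holds with `C_d = 1`. -/

open MeasureTheory Set

section Tensor

variable {ι : Type*} [Fintype ι] (a b : ι → ℝ)

lemma volume_restrict_Icc_pi :
    volume.restrict (Icc a b) = Measure.pi fun i => volume.restrict (Icc (a i) (b i)) := by
  rw [← pi_univ_Icc, volume_pi, Measure.restrict_pi_pi]

variable {a b}

lemma integrableOn_Icc_prod {g : ι → ℝ → ℝ} (hg : ∀ i, IntegrableOn (g i) (Icc (a i) (b i))) :
    IntegrableOn (fun x => ∏ i, g i (x i)) (Icc a b) := by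
  rw [IntegrableOn, volume_restrict_Icc_pi]
  exact .fintype_prod hg

lemma setIntegral_Icc_prod (g : ι → ℝ → ℝ) :
    ∫ x in Icc a b, ∏ i, g i (x i) = ∏ i, ∫ t in Icc (a i) (b i), g i t := by
  rw [volume_restrict_Icc_pi, integral_fintype_prod_eq_prod]

end Tensor

def dyadicInterval (j : ℤ) (m : ℕ) : Set ℝ :=
  Ico ((m : ℝ) / 2 ^ j.toNat) ((m + 1) / 2 ^ j.toNat)

section Dyadic

variable {j : ℤ} {m : ℕ}

lemma eq_zero_of_lt_two_pow_toNat (hj : j < 0) (hm : m < 2 ^ j.toNat) : m = 0 := by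
  simpa [Int.toNat_of_nonpos hj.le] using hm

lemma dyadicInterval_of_neg (hj : j < 0) (hm : m < 2 ^ j.toNat) : dyadicInterval j m = Ico 0 1 := by
  simp [dyadicInterval, eq_zero_of_lt_two_pow_toNat hj hm, Int.toNat_of_nonpos hj.le]

lemma memI_iff_mem_dyadicInterval (hm : m < 2 ^ j.toNat) {x : ℝ} :
    memI j m x ↔ x ∈ dyadicInterval j m := by
  unfold memI
  split_ifs with hj
  · rw [dyadicInterval_of_neg hj hm, mem_Ico]
  · rfl

lemma dyadicInterval_subset_Icc (hm : m < 2 ^ j.toNat) : dyadicInterval j m ⊆ Icc 0 1 := by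
  have hm' : (m : ℝ) + 1 ≤ 2 ^ j.toNat := by exact_mod_cast hm
  rintro t ⟨ht₁, ht₂⟩
  exact ⟨le_trans (by positivity) ht₁, ht₂.le.trans ((div_le_one (by positivity)).2 hm')⟩

lemma volume_real_dyadicInterval : volume.real (dyadicInterval j m) = (2 ^ j.toNat)⁻¹ := by
  rw [dyadicInterval, Real.volume_real_Ico_of_le (by gcongr; linarith)]
  field_simp
  ring

lemma dyadic_midpoint_mem_Ioo (n : ℕ) :
    (2 * (m : ℝ) + 1) / 2 ^ (n + 1) ∈ Ioo ((m : ℝ) / 2 ^ n) ((m + 1) / 2 ^ n) := by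
  constructor <;> rw [div_lt_div_iff₀ (by positivity) (by positivity), pow_succ] <;>
    nlinarith [pow_pos (two_pos (α := ℝ)) n]

lemma measurable_haar1 (j : ℤ) (m : ℕ) : Measurable (haar1 j m) := by
  unfold haar1
  split_ifs
  · exact measurable_const.ite measurableSet_Ico measurable_const
  · exact measurable_const.ite measurableSet_Ico
      (measurable_const.ite measurableSet_Ico measurable_const)

lemma abs_haar1_le_one (j : ℤ) (m : ℕ) (t : ℝ) : |haar1 j m t| ≤ 1 := by
  unfold haar1
  split_ifs <;> simp

lemma haar1_eq_zero_of_notMem (hm : m < 2 ^ j.toNat) {t : ℝ} (ht : t ∉ dyadicInterval j m) :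
    haar1 j m t = 0 := by
  rcases lt_or_ge j 0 with hj | hj
  · rw [dyadicInterval_of_neg hj hm, mem_Ico] at ht
    simp only [haar1, hj, if_true, if_neg ht]
  · have hmid := dyadic_midpoint_mem_Ioo (m := m) j.toNat
    simp only [dyadicInterval, mem_Ico] at ht
    unfold haar1
    split_ifs <;> grind

lemma setIntegral_haar1 (hj : 0 ≤ j) (hm : m < 2 ^ j.toNat) :
    ∫ t in Icc 0 1, haar1 j m t = 0 := by
  obtain ⟨hac, hcb⟩ := dyadic_midpoint_mem_Ioo (m := m) j.toNat
  have hsub := dyadicInterval_subset_Icc hm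
  have hhaar : haar1 j m = fun t =>
      (Ico ((m : ℝ) / 2 ^ j.toNat) ((2 * m + 1) / 2 ^ (j.toNat + 1))).indicator 1 t
        - (Ico ((2 * (m : ℝ) + 1) / 2 ^ (j.toNat + 1)) ((m + 1) / 2 ^ j.toNat)).indicator 1 t := by
    funext t
    simp only [haar1, not_lt.2 hj, if_false, indicator, mem_Ico, Pi.one_apply]
    split_ifs <;> grind
  rw [hhaar, integral_sub ((integrable_const 1).indicator measurableSet_Ico)
      ((integrable_const 1).indicator measurableSet_Ico),
    integral_indicator_one measurableSet_Ico, integral_indicator_one measurableSet_Ico,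
    measureReal_restrict_apply measurableSet_Ico, measureReal_restrict_apply measurableSet_Ico,
    inter_eq_left.2 ((Ico_subset_Ico_right hcb.le).trans hsub),
    inter_eq_left.2 ((Ico_subset_Ico_left hac.le).trans hsub),
    Real.volume_real_Ico_of_le hac.le, Real.volume_real_Ico_of_le hcb.le]
  field_simp
  ring

end Dyadic

noncomputable def haarCoef1 (g : ℝ → ℝ) (j : ℤ) (m : ℕ) : ℝ :=
  ∫ t in Icc (0 : ℝ) 1, g t * haar1 j m t

section HaarCoef1

variable {j : ℤ} {m : ℕ}

lemma integrableOn_mul_haar1 {g : ℝ → ℝ} (hg : IntegrableOn g (Icc 0 1)) (j : ℤ) (m : ℕ) :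
    IntegrableOn (fun t => g t * haar1 j m t) (Icc 0 1) :=
  hg.mul_bdd (measurable_haar1 j m).aestronglyMeasurable (ae_of_all _ (abs_haar1_le_one j m))

lemma haarCoef1_sub {f g : ℝ → ℝ} (hf : IntegrableOn f (Icc 0 1)) (hg : IntegrableOn g (Icc 0 1)) :
    haarCoef1 (fun t => f t - g t) j m = haarCoef1 f j m - haarCoef1 g j m := by
  simp only [haarCoef1, sub_mul]
  exact integral_sub (integrableOn_mul_haar1 hf j m) (integrableOn_mul_haar1 hg j m)

lemma haarCoef1_const (c : ℝ) (hj : 0 ≤ j) (hm : m < 2 ^ j.toNat) :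
    haarCoef1 (fun _ => c) j m = 0 := by
  rw [haarCoef1, integral_const_mul, setIntegral_haar1 hj hm, mul_zero]

lemma abs_haarCoef1_le (hm : m < 2 ^ j.toNat) {g : ℝ → ℝ} {M : ℝ}
    (hg : ∀ t ∈ dyadicInterval j m, |g t| ≤ M) :
    |haarCoef1 g j m| ≤ M * (2 ^ j.toNat)⁻¹ := by
  have hI : MeasurableSet (dyadicInterval j m) := measurableSet_Ico
  have hpt : ∀ t, |g t * haar1 j m t| ≤ (dyadicInterval j m).indicator (fun _ => M) t := by
    intro t
    by_cases ht : t ∈ dyadicInterval j m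
    · rw [indicator_of_mem ht, abs_mul, ← mul_one M]
      exact mul_le_mul (hg t ht) (abs_haar1_le_one j m t) (abs_nonneg _)
        ((abs_nonneg _).trans (hg t ht))
    · rw [indicator_of_notMem ht, haar1_eq_zero_of_notMem hm ht, mul_zero, abs_zero]
  calc |haarCoef1 g j m| ≤ ∫ t in Icc 0 1, |g t * haar1 j m t| := abs_integral_le_integral_abs
    _ ≤ ∫ t in Icc 0 1, (dyadicInterval j m).indicator (fun _ => M) t :=
      integral_mono_of_nonneg (ae_of_all _ fun t => abs_nonneg _)
        ((integrable_const M).indicator hI) (ae_of_all _ hpt)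
    _ = M * (2 ^ j.toNat)⁻¹ := by
      rw [integral_indicator_const _ hI, measureReal_restrict_apply hI,
        inter_eq_left.2 (dyadicInterval_subset_Icc hm), volume_real_dyadicInterval, smul_eq_mul,
        mul_comm]

lemma abs_haarCoef1_Ioi_le (hm : m < 2 ^ j.toNat) (z : ℝ) :
    |haarCoef1 (fun t => if z < t then 1 else 0) j m| ≤ (2 ^ j.toNat)⁻¹ := by
  simpa using abs_haarCoef1_le hm (M := 1) fun t _ => by split_ifs <;> simp

lemma haarCoef1_Ioi_eq_zero (hm : m < 2 ^ j.toNat) {z : ℝ} (hz : 0 ≤ z)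
    (hzI : z ∉ dyadicInterval j m) :
    haarCoef1 (fun t => if z < t then 1 else 0) j m = 0 := by
  simp only [dyadicInterval, mem_Ico, not_and_or, not_le, not_lt] at hzI
  rcases hzI with hza | hbz
  · -- left of `I_{j,m}` the step function is `1` on the support of `h_{j,m}`
    have hj : 0 ≤ j := by
      by_contra! hj
      simp [eq_zero_of_lt_two_pow_toNat hj hm] at hza
      linarith
    refine (setIntegral_congr_fun measurableSet_Icc fun t _ => ?_).trans (haarCoef1_const 1 hj hm)
    by_cases ht : t ∈ dyadicInterval j m
    · dsimp only
      rw [if_pos (hza.trans_le ht.1)]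
    · simp [haar1_eq_zero_of_notMem hm ht]
  · refine (setIntegral_congr_fun measurableSet_Icc (g := fun _ => 0) fun t _ => ?_).trans
      (integral_zero ℝ ℝ)
    by_cases hzt : z < t
    · rw [haar1_eq_zero_of_notMem hm fun ht => ht.2.not_ge (hbz.trans hzt.le), mul_zero]
    · simp [hzt]

lemma abs_haarCoef1_id_le (hm : m < 2 ^ j.toNat) :
    |haarCoef1 id j m| ≤ ((2 ^ j.toNat)⁻¹) ^ 2 := by
  set a : ℝ := m / 2 ^ j.toNat
  have hshift : haarCoef1 id j m = haarCoef1 (fun t => t - a) j m := by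
    rcases lt_or_ge j 0 with hj | hj
    · simp [a, eq_zero_of_lt_two_pow_toNat hj hm]
      rfl
    · have := haarCoef1_sub (j := j) (m := m) continuous_id.integrableOn_Icc
        (continuous_const (y := a)).integrableOn_Icc
      rw [haarCoef1_const a hj hm, sub_zero] at this
      exact this.symm
  rw [hshift, sq]
  refine abs_haarCoef1_le hm fun t ht => ?_
  have : (m + 1 : ℝ) / 2 ^ j.toNat - a = (2 ^ j.toNat)⁻¹ := by
    simp only [a]
    field_simp
    ring
  rw [abs_of_nonneg (by linarith [ht.1])]
  linarith [ht.2]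

end HaarCoef1
section HaarCoef

variable {d : ℕ}

lemma haarCoef_prod (g : Fin d → ℝ → ℝ) (j : Fin d → ℤ) (m : Fin d → ℕ) :
    haarCoef (fun x => ∏ i, g i (x i)) j m = ∏ i, haarCoef1 (g i) (j i) (m i) := by
  simp only [haarCoef, haarD]
  simp_rw [← Finset.prod_mul_distrib]
  exact setIntegral_Icc_prod (a := 0) (b := 1) fun i t => g i t * haar1 (j i) (m i) t

lemma integrableOn_prod_mul_haarD {g : Fin d → ℝ → ℝ} (hg : ∀ i, IntegrableOn (g i) (Icc 0 1))
    (j : Fin d → ℤ) (m : Fin d → ℕ) :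
    IntegrableOn (fun x => (∏ i, g i (x i)) * haarD j m x) (Icc 0 1) := by
  simp_rw [haarD, ← Finset.prod_mul_distrib]
  exact integrableOn_Icc_prod fun i => integrableOn_mul_haar1 (hg i) (j i) (m i)

variable {N : ℕ} {P : Fin N → Fin d → ℝ}

lemma discF_eq_of_nonneg (hP : ∀ k i, 0 ≤ P k i) :
    discF N P = fun x : Fin d → ℝ =>
      1 / N * ∑ k, ∏ i, (if P k i < x i then 1 else 0) - ∏ i, id (x i) := by
  funext x
  simp only [discF, Fintype.prod_boole, hP, true_and, id]
  congr!

lemma haarCoef_discF (hP : ∀ k i, 0 ≤ P k i) (j : Fin d → ℤ) (m : Fin d → ℕ) :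
    haarCoef (discF N P) j m =
      1 / N * ∑ k, ∏ i, haarCoef1 (fun t => if P k i < t then 1 else 0) (j i) (m i)
        - ∏ i, haarCoef1 id (j i) (m i) := by
  have hstep : ∀ z : ℝ, IntegrableOn (fun t => if z < t then (1 : ℝ) else 0) (Icc 0 1) :=
    fun z => (integrable_const (1 : ℝ)).indicator measurableSet_Ioi
  have hsum : ∀ k ∈ Finset.univ, IntegrableOn
      (fun x => (∏ i, if P k i < x i then (1 : ℝ) else 0) * haarD j m x) (Icc 0 1) :=
    fun k _ => integrableOn_prod_mul_haarD (fun i => hstep (P k i)) j m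
  have hid := integrableOn_prod_mul_haarD (fun _ => continuous_id.integrableOn_Icc) j m
  simp only [← haarCoef_prod, discF_eq_of_nonneg hP, haarCoef, sub_mul, mul_assoc, Finset.sum_mul]
  rw [integral_sub ((integrable_finsetSum _ hsum).const_mul _) hid, integral_const_mul,
    integral_finsetSum _ hsum]

lemma prod_inv_two_pow_toNat (j : Fin d → ℤ) :
    ∏ i, ((2 : ℝ) ^ (j i).toNat)⁻¹ = ((2 : ℝ) ^ absj j)⁻¹ := by
  rw [Finset.prod_inv_distrib, Finset.prod_pow_eq_pow_sum, absj]

variable {j : Fin d → ℤ} {m : Fin d → ℕ}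

lemma abs_prod_haarCoef1_Ioi_le (hm : ∀ i, m i < 2 ^ (j i).toNat) (z : Fin d → ℝ) :
    |∏ i, haarCoef1 (fun t => if z i < t then 1 else 0) (j i) (m i)| ≤ ((2 : ℝ) ^ absj j)⁻¹ := by
  rw [Finset.abs_prod, ← prod_inv_two_pow_toNat]
  exact Finset.prod_le_prod (fun i _ => abs_nonneg _) fun i _ => abs_haarCoef1_Ioi_le (hm i) (z i)

lemma prod_haarCoef1_Ioi_eq_zero (hm : ∀ i, m i < 2 ^ (j i).toNat) {z : Fin d → ℝ}
    (hz : ∀ i, 0 ≤ z i) (hzI : ¬ ∀ i, memI (j i) (m i) (z i)) :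
    ∏ i, haarCoef1 (fun t => if z i < t then 1 else 0) (j i) (m i) = 0 := by
  push Not at hzI
  obtain ⟨i, hi⟩ := hzI
  exact Finset.prod_eq_zero (Finset.mem_univ i)
    (haarCoef1_Ioi_eq_zero (hm i) (hz i) ((memI_iff_mem_dyadicInterval (hm i)).not.1 hi))

lemma abs_prod_haarCoef1_id_le (hm : ∀ i, m i < 2 ^ (j i).toNat) :
    |∏ i, haarCoef1 id (j i) (m i)| ≤ (((2 : ℝ) ^ absj j)⁻¹) ^ 2 := by
  rw [Finset.abs_prod, ← prod_inv_two_pow_toNat, ← Finset.prod_pow]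
  exact Finset.prod_le_prod (fun i _ => abs_nonneg _) fun i _ => abs_haarCoef1_id_le (hm i)

open Classical in
lemma abs_sum_prod_haarCoef1_Ioi_le (hm : ∀ i, m i < 2 ^ (j i).toNat)
    (hP : ∀ k i, 0 ≤ P k i) :
    |∑ k, ∏ i, haarCoef1 (fun t => if P k i < t then 1 else 0) (j i) (m i)| ≤
      (Finset.univ.filter fun k => ∀ i, memI (j i) (m i) (P k i)).card * ((2 : ℝ) ^ absj j)⁻¹ := by
  rw [← Finset.sum_filter_of_ne fun k _ hk =>
    not_not.1 (mt (prod_haarCoef1_Ioi_eq_zero hm (hP k)) hk)]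
  calc _ ≤ _ := Finset.abs_sum_le_sum_abs _ _
    _ ≤ _ := Finset.sum_le_card_nsmul _ _ _ fun k _ => abs_prod_haarCoef1_Ioi_le hm (P k)
    _ = _ := nsmul_eq_mul _ _

end HaarCoef

open Classical in
theorem stmt9_general (d : ℕ) :
    ∃ C : ℝ, 0 < C ∧ ∀ (N : ℕ), 0 < N → ∀ P : Fin N → Fin d → ℝ,
      (∀ k i, 0 ≤ P k i ∧ P k i < 1) →
      ∀ (j : Fin d → ℤ) (m : Fin d → ℕ), validIdx j m →
      ∀ B : ℕ,
        (Finset.univ.filter fun k : Fin N => ∀ i, memI (j i) (m i) (P k i)).card ≤ B →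
        |haarCoef (discF N P) j m| ≤
          ((B : ℝ) / N) * (2 : ℝ) ^ (-(absj j : ℤ)) + C * (2 : ℝ) ^ (-(2 * (absj j : ℤ))) := by
  refine ⟨1, one_pos, fun N _ P hP j m hjm B hB => ?_⟩
  have hP₀ : ∀ k i, 0 ≤ P k i := fun k i => (hP k i).1
  set w : ℝ := ((2 : ℝ) ^ absj j)⁻¹
  have hw : (2 : ℝ) ^ (-(absj j : ℤ)) = w := by rw [zpow_neg, zpow_natCast]
  have hw2 : (2 : ℝ) ^ (-(2 * (absj j : ℤ))) = w ^ 2 := by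
    rw [show -(2 * (absj j : ℤ)) = -(absj j : ℤ) * 2 by ring, zpow_mul, hw]
    norm_cast
  have hpoints := abs_sum_prod_haarCoef1_Ioi_le hjm.2 hP₀
  rw [haarCoef_discF hP₀, hw, hw2, one_mul]
  calc _ ≤ |1 / (N : ℝ)| * |∑ k, ∏ i, haarCoef1 (fun t => if P k i < t then 1 else 0) (j i) (m i)|
        + |∏ i, haarCoef1 id (j i) (m i)| := by rw [← abs_mul]; exact abs_sub _ _
    _ ≤ 1 / N * (B * w) + w ^ 2 := by
      rw [abs_of_nonneg (by positivity)]
      gcongr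
      · exact hpoints.trans (by gcongr)
      · exact abs_prod_haarCoef1_id_le hjm.2
    _ = B / N * w + w ^ 2 := by ring

open Classical in
/-- If the dyadic interval `I_{j,m}` contains at most `B` points of the `N`-point set `P`,
then `|⟨D_P, h_{j,m}⟩| ≤ (B/N)·2^{-|j|} + C_d·2^{-2|j|}` with `C_d` depending only on `d`. -/
theorem stmt9 (d : ℕ) (hd : 0 < d) :
    ∃ C : ℝ, 0 < C ∧ ∀ (N : ℕ), 0 < N → ∀ P : Fin N → Fin d → ℝ,
      (∀ k i, 0 ≤ P k i ∧ P k i < 1) →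
      ∀ (j : Fin d → ℤ) (m : Fin d → ℕ), validIdx j m →
      ∀ B : ℕ,
        (Finset.univ.filter fun k : Fin N => ∀ i, memI (j i) (m i) (P k i)).card ≤ B →
        |haarCoef (discF N P) j m| ≤
          ((B : ℝ) / N) * (2 : ℝ) ^ (-(absj j : ℤ)) + C * (2 : ℝ) ^ (-(2 * (absj j : ℤ))) :=
  stmt9_general d
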